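/- Let k, t, r be reproducing kernels on nonempty sets X, Y, Z with t and r nonzero. If φ : X → Y is a composition factor of k with t and ψ : Y → Z is a composition factor of t with r, then ψ∘φ is a composition factor of k with r. In particular, the set Fact(k) of composition factors of a nonzero kernel k with itself is closed under composition (forms a semigroup). -/

import Mathlib

/-- Positive semidefinite kernel. -/
def IsPSDKernel {X : Type*} (k : X → X → ℂ) : Prop :=
  ∀ (n : ℕ) (x : Fin n → X) (c : Fin n → ℂ),
    0 ≤ (∑ i, ∑ j, starRingEnd ℂ (c i) * k (x i) (x j) * c j).re ∧
    (∑ i, ∑ j, starRingEnd ℂ (c i) * k (x i) (x j) * c j).im = 0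

/-- `φ : X → Y` is a composition factor of `k` with `t` (for `t` nonzero). -/
def IsCompFactor {X Y : Type*} (k : X → X → ℂ) (t : Y → Y → ℂ) (φ : X → Y) : Prop :=
  IsPSDKernel (fun x y => k x y / t (φ x) (φ y))

/-!
Since `t` vanishes nowhere, `k / (r ∘ (ψ ∘ φ)) = (k / (t ∘ φ)) · ((t / (r ∘ ψ)) ∘ φ)`. The second
factor is the positive semidefinite kernel `t / (r ∘ ψ)` pulled back along `φ`, so the product is
positive semidefinite by the Schur product theorem.
-/

open Matrix ComplexOrder

/-- Over `ℂ`, nonnegativity of the quadratic form alone forces a matrix to be Hermitian. -/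
theorem Matrix.posSemidef_iff_forall_dotProduct_mulVec_nonneg {n : Type*} [Fintype n]
    {M : Matrix n n ℂ} : M.PosSemidef ↔ ∀ x, 0 ≤ star x ⬝ᵥ (M *ᵥ x) := by
  classical
  have re_nonneg_iff (z : ℂ) : ((z.re : ℂ) = z ∧ 0 ≤ z.re) ↔ 0 ≤ z := by
    rw [Complex.nonneg_iff, ← Complex.conj_eq_iff_re, Complex.conj_eq_iff_im, and_comm, eq_comm]
  rw [← Matrix.isPositive_toEuclideanLin_iff, LinearMap.isPositive_iff_complex]
  simp only [RCLike.re_to_complex, re_nonneg_iff, EuclideanSpace.inner_eq_star_dotProduct]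
  refine (EuclideanSpace.equiv n ℂ).forall_congr fun x => ?_
  rw [← star_nonneg_iff, Matrix.star_dotProduct, dotProduct_comm]
  rfl

theorem isPSDKernel_iff_posSemidef {X : Type*} {k : X → X → ℂ} :
    IsPSDKernel k ↔ ∀ (n : ℕ) (x : Fin n → X), (Matrix.of fun i j => k (x i) (x j)).PosSemidef := by
  have quadratic_form (n : ℕ) (x : Fin n → X) (c : Fin n → ℂ) :
      star c ⬝ᵥ ((Matrix.of fun i j => k (x i) (x j)) *ᵥ c) =
        ∑ i, ∑ j, starRingEnd ℂ (c i) * k (x i) (x j) * c j := by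
    simp only [dotProduct, mulVec, Finset.mul_sum, mul_assoc, Pi.star_apply, of_apply,
      Complex.star_def]
  simp only [posSemidef_iff_forall_dotProduct_mulVec_nonneg, quadratic_form, Complex.nonneg_iff,
    eq_comm (a := (0 : ℝ)), IsPSDKernel]

theorem IsPSDKernel.mul {X : Type*} {k t : X → X → ℂ} (hk : IsPSDKernel k) (ht : IsPSDKernel t) :
    IsPSDKernel (fun x y => k x y * t x y) :=
  isPSDKernel_iff_posSemidef.2 fun n x =>
    (isPSDKernel_iff_posSemidef.1 hk n x).hadamard (isPSDKernel_iff_posSemidef.1 ht n x)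

theorem IsPSDKernel.comp {X Y : Type*} {t : Y → Y → ℂ} (ht : IsPSDKernel t) (φ : X → Y) :
    IsPSDKernel (fun x y => t (φ x) (φ y)) :=
  fun n x c => ht n (φ ∘ x) c

theorem compFactor_comp_general
    {X Y Z : Type*}
    (k : X → X → ℂ) (t : Y → Y → ℂ) (r : Z → Z → ℂ)
    (htne : ∀ y y' : Y, t y y' ≠ 0)
    (φ : X → Y) (ψ : Y → Z)
    (hφ : IsCompFactor k t φ) (hψ : IsCompFactor t r ψ) :
    IsCompFactor k r (ψ ∘ φ) := by
  have hprod := IsPSDKernel.mul hφ (hψ.comp φ)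
  have hcancel : (fun x x' => k x x' / t (φ x) (φ x') * (t (φ x) (φ x') / r (ψ (φ x)) (ψ (φ x'))))
      = fun x x' => k x x' / r (ψ (φ x)) (ψ (φ x')) := by
    funext x x'
    rw [div_mul_div_comm, mul_comm (k x x'), mul_div_mul_left _ _ (htne _ _)]
  rwa [hcancel] at hprod

/-- composition factors compose: if `φ ∈ Fact(k,t)` and `ψ ∈ Fact(t,r)`
(with `t`, `r` nonzero), then `ψ ∘ φ ∈ Fact(k,r)`.  In particular, taking `k = t = r`,
the set `Fact(k)` of composition factors of a nonzero kernel `k` with itself is closed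
under composition, i.e. forms a semigroup. -/
theorem compFactor_comp
    {X Y Z : Type*} [Nonempty X] [Nonempty Y] [Nonempty Z]
    (k : X → X → ℂ) (t : Y → Y → ℂ) (r : Z → Z → ℂ)
    (hk : IsPSDKernel k) (ht : IsPSDKernel t) (hr : IsPSDKernel r)
    (htne : ∀ y y' : Y, t y y' ≠ 0) (hrne : ∀ z z' : Z, r z z' ≠ 0)
    (φ : X → Y) (ψ : Y → Z)
    (hφ : IsCompFactor k t φ) (hψ : IsCompFactor t r ψ) :
    IsCompFactor k r (ψ ∘ φ) :=
  compFactor_comp_general k t r htne φ ψ hφ hψ
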